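/- For every integer d ≥ 2, (2/(d-2)!)·∫_0^1 t^{d-2}·(√(1-t²) - t·arccos(t))/π dt = 1/(2^d·Γ(d/2+1)²). -/

import Mathlib

open Real intervalIntegral MeasureTheory Set

lemma gamma_half_ne (n : ℕ) : ((n:ℝ)/2 + 1) ≠ 0 := by positivity

lemma gamma_half_pos (n : ℕ) : 0 < Real.Gamma ((n:ℝ)/2 + 1) :=
  Real.Gamma_pos_of_pos (by positivity)

lemma cos_pow_int (d : ℕ) :
    ∫ x in (0:ℝ)..(π/2), Real.cos x ^ d
      = π * d.factorial / (2^(d+1) * Real.Gamma ((d:ℝ)/2+1)^2) := by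
  induction d using Nat.strong_induction_on with
  | _ d ih =>
    match d with
    | 0 => simp [Real.Gamma_one]
    | 1 =>
      have h12 : Real.Gamma ((1:ℝ)/2 + 1) = Real.sqrt π / 2 := by
        rw [Real.Gamma_add_one (by norm_num), Real.Gamma_one_half_eq]; ring
      simp only [pow_one, integral_cos, Real.sin_pi_div_two, Real.sin_zero, Nat.cast_one, h12]
      rw [div_pow, Real.sq_sqrt Real.pi_pos.le]
      norm_num
      field_simp
    | (n+2) =>
      rw [integral_cos_pow, ih n (by omega)]
      simp only [Real.cos_pi_div_two, Real.sin_zero, Real.cos_zero, Real.sin_pi_div_two]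
      have hG : Real.Gamma ((n+2:ℕ)/2 + 1) = ((n:ℝ)/2+1) * Real.Gamma ((n:ℝ)/2+1) := by
        push_cast
        have : (n:ℝ)/2 + 1 + 1 = ((n:ℝ)+2)/2 + 1 := by ring
        rw [← this, Real.Gamma_add_one (gamma_half_ne n)]
      rw [hG]
      have hfac : ((n+2).factorial : ℝ) = (n+2) * (n+1) * n.factorial := by
        push_cast [Nat.factorial_succ]; ring
      have h1 := (gamma_half_pos n).ne'
      have h2 : (n:ℝ) + 2 ≠ 0 := by positivity
      rw [hfac]
      field_simp
      ring

noncomputable def g (t : ℝ) : ℝ := (Real.sqrt (1 - t^2) - t * Real.arccos t) / Real.pi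

lemma g_cont : Continuous g := by
  unfold g
  exact ((Real.continuous_sqrt.comp (by continuity)).sub
    (continuous_id.mul Real.continuous_arccos)).div_const _

theorem g_moment (d : ℕ) (hd : 2 ≤ d) :
    (2 / ((d - 2).factorial : ℝ)) * ∫ t in (0:ℝ)..1, t ^ (d - 2) * g t
      = 1 / (2 ^ d * (Real.Gamma ((d : ℝ) / 2 + 1)) ^ 2) := by
  obtain ⟨n, rfl⟩ : ∃ n, d = n + 2 := ⟨d - 2, by omega⟩
  have hsub : n + 2 - 2 = n := by omega
  rw [hsub]
  -- change of variables t = cos x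
  have cov : ∫ t in (0:ℝ)..1, t ^ n * g t
      = ∫ x in (0:ℝ)..(π/2), Real.sin x • ((Real.cos x) ^ n * g (Real.cos x)) := by
    have h := intervalIntegral.integral_comp_smul_deriv (a := 0) (b := π/2)
      (f := Real.cos) (f' := fun x => -Real.sin x) (g := fun u => u ^ n * g u)
      (fun x _ => Real.hasDerivAt_cos x) (by fun_prop) ((continuous_pow n).mul g_cont)
    simp only [Real.cos_zero, Real.cos_pi_div_two, Function.comp] at h
    calc ∫ t in (0:ℝ)..1, t ^ n * g t = -∫ t in (1:ℝ)..0, t ^ n * g t := by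
          rw [intervalIntegral.integral_symm]
      _ = -∫ x in (0:ℝ)..(π/2), (-Real.sin x) • ((Real.cos x) ^ n * g (Real.cos x)) := by
          rw [h]
      _ = _ := by
          rw [← intervalIntegral.integral_neg]
          congr 1 with x
          simp [neg_smul]
  rw [cov]
  -- rewrite integrand on [0, π/2]
  have congr1 : ∫ x in (0:ℝ)..(π/2), Real.sin x • ((Real.cos x) ^ n * g (Real.cos x))
      = ∫ x in (0:ℝ)..(π/2),
          ((Real.cos x ^ n * Real.sin x ^ 2 - x * (Real.cos x ^ (n+1) * Real.sin x)) / π) := by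
    apply intervalIntegral.integral_congr
    intro x hx
    rw [Set.uIcc_of_le (by positivity)] at hx
    have hs : 0 ≤ Real.sin x := Real.sin_nonneg_of_nonneg_of_le_pi hx.1
      (hx.2.trans (by linarith [Real.pi_pos]))
    have hac : Real.arccos (Real.cos x) = x := Real.arccos_cos hx.1
      (hx.2.trans (by linarith [Real.pi_pos]))
    have hsq : Real.sqrt (1 - Real.cos x ^ 2) = Real.sin x := by
      rw [← Real.sin_sq x, Real.sqrt_sq hs]
    simp only [smul_eq_mul, g, hac, hsq]
    ring
  rw [congr1]
  have cint : ∀ m : ℕ, IntervalIntegrable (fun x => Real.cos x ^ m * Real.sin x ^ 2)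
      MeasureTheory.volume 0 (π/2) := fun m => (by fun_prop : Continuous _).intervalIntegrable _ _
  -- split the integral
  have split : ∫ x in (0:ℝ)..(π/2),
        ((Real.cos x ^ n * Real.sin x ^ 2 - x * (Real.cos x ^ (n+1) * Real.sin x)) / π)
      = (1/π) * ((∫ x in (0:ℝ)..(π/2), Real.cos x ^ n * Real.sin x ^ 2)
          - ∫ x in (0:ℝ)..(π/2), x * (Real.cos x ^ (n+1) * Real.sin x)) := by
    rw [← intervalIntegral.integral_sub (cint n)
      ((by fun_prop : Continuous fun x => x * (Real.cos x ^ (n+1) * Real.sin x)).intervalIntegrable _ _),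
      ← intervalIntegral.integral_const_mul]
    congr 1 with x
    ring
  rw [split]
  -- first piece : sin^2 = 1 - cos^2
  have piece1 : ∫ x in (0:ℝ)..(π/2), Real.cos x ^ n * Real.sin x ^ 2
      = (∫ x in (0:ℝ)..(π/2), Real.cos x ^ n) - ∫ x in (0:ℝ)..(π/2), Real.cos x ^ (n+2) := by
    rw [← intervalIntegral.integral_sub ((by fun_prop : Continuous _).intervalIntegrable _ _)
      ((by fun_prop : Continuous _).intervalIntegrable _ _)]
    congr 1 with x
    rw [Real.sin_sq]
    ring
  -- second piece : integration by parts
  have hn2 : ((n:ℝ) + 2) ≠ 0 := by positivity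
  have piece2 : ∫ x in (0:ℝ)..(π/2), x * (Real.cos x ^ (n+1) * Real.sin x)
      = (1/((n:ℝ)+2)) * ∫ x in (0:ℝ)..(π/2), Real.cos x ^ (n+2) := by
    have hv : ∀ x ∈ Set.uIcc (0:ℝ) (π/2),
        HasDerivAt (fun x => -Real.cos x ^ (n+2) / ((n:ℝ)+2))
          (Real.cos x ^ (n+1) * Real.sin x) x := by
      intro x _
      have h := (((Real.hasDerivAt_cos x).pow (n+2)).neg.div_const ((n:ℝ)+2))
      have e : (fun x => -Real.cos x ^ (n+2) / ((n:ℝ)+2))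
          = fun x => (-Real.cos ^ (n+2)) x / ((n:ℝ)+2) := by
        funext y; simp
      rw [e]
      refine h.congr_deriv ?_
      rw [show n + 2 - 1 = n + 1 by omega, div_eq_iff hn2]
      push_cast
      ring
    have hu : ∀ x ∈ Set.uIcc (0:ℝ) (π/2), HasDerivAt (fun x : ℝ => x) 1 x :=
      fun x _ => hasDerivAt_id x
    have h := intervalIntegral.integral_mul_deriv_eq_deriv_mul hu hv
      ((continuous_const).intervalIntegrable _ _)
      ((by fun_prop : Continuous fun x => Real.cos x ^ (n+1) * Real.sin x).intervalIntegrable _ _)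
    rw [h]
    simp only [Real.cos_pi_div_two, Real.cos_zero, one_mul]
    rw [zero_pow (by omega), one_pow]
    rw [show ∫ x in (0:ℝ)..(π/2), -Real.cos x ^ (n+2) / ((n:ℝ)+2)
        = ∫ x in (0:ℝ)..(π/2), (-(1/((n:ℝ)+2))) * Real.cos x ^ (n+2) from by
          congr 1 with x; ring,
      intervalIntegral.integral_const_mul]
    ring
  rw [piece1, piece2]
  -- recurrence: C_n = (n+2)/(n+1) * C_{n+2}
  have hrec : ∫ x in (0:ℝ)..(π/2), Real.cos x ^ n
      = (((n:ℝ)+2)/((n:ℝ)+1)) * ∫ x in (0:ℝ)..(π/2), Real.cos x ^ (n+2) := by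
    have h := integral_cos_pow (a := 0) (b := π/2) (n := n)
    simp only [Real.cos_pi_div_two, Real.sin_zero, Real.cos_zero, Real.sin_pi_div_two] at h
    rw [zero_pow (by omega)] at h
    rw [h]
    have hn1 : ((n:ℝ) + 1) ≠ 0 := by positivity
    field_simp
    ring
  rw [hrec, cos_pow_int (n+2)]
  have hG : Real.Gamma (((n:ℕ)+2:ℕ)/2 + 1) = ((n:ℝ)/2+1) * Real.Gamma ((n:ℝ)/2+1) := by
    push_cast
    have : (n:ℝ)/2 + 1 + 1 = ((n:ℝ)+2)/2 + 1 := by ring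
    rw [← this, Real.Gamma_add_one (gamma_half_ne n)]
  have hfac : ((n+2).factorial : ℝ) = ((n:ℝ)+2) * ((n:ℝ)+1) * n.factorial := by
    push_cast [Nat.factorial_succ]; ring
  have h1 := (gamma_half_pos n).ne'
  have hn1 : ((n:ℝ) + 1) ≠ 0 := by positivity
  have hfp : ((n.factorial : ℝ)) ≠ 0 := by positivity
  push_cast [hG, hfac]
  have hpi := Real.pi_ne_zero
  field_simp
  ring
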